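/- Let d ≥ 5 and let D : ℤ^d → ℝ be defined by D(x) = 2^{-d} if |x_j| = 1 for every j, and D(x) = 0 otherwise. Then for all integers ν ≥ 1 and N ≥ 1, ∑_{n=ν}^{∞} (n - ν + 1)·D^{*2n}(0) ≤ ∑_{n=0}^{N-1} (n+1)·D^{*2(n+ν)}(0) + π^{-d/2}·(ν+N)^{(2-d)/2} + (2/(π^{d/2}(d-4)))·(ν+N)^{(4-d)/2} - (2(ν-1)/(π^{d/2}(d-2)))·(ν+N)^{(2-d)/2}. -/

import Mathlib

open scoped BigOperators

/-- The step distribution of the nearest-neighbor random walk on the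
`d`-dimensional BCC lattice. -/
noncomputable def bccStep (d : ℕ) : (Fin d → ℤ) → ℝ := fun x =>
  if ∀ j, |x j| = 1 then (1 : ℝ) / 2 ^ d else 0

/-- `n`-fold convolution power of `f` on `ℤ^d`; the `0`-th power is the
Kronecker delta at the origin. -/
noncomputable def convPow (d : ℕ) (f : (Fin d → ℤ) → ℝ) : ℕ → (Fin d → ℤ) → ℝ
  | 0, x => if x = 0 then 1 else 0
  | n + 1, x => ∑' y : Fin d → ℤ, convPow d f n y * f (x - y)

/-- convolution powers of the one-dimensional simple random walk step. -/
noncomputable def oneD : ℕ → ℤ → ℝ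
  | 0 => fun t => if t = 0 then 1 else 0
  | m + 1 => fun t => (oneD m (t - 1) + oneD m (t + 1)) / 2

lemma bccStep_eq_prod (d : ℕ) (x : Fin d → ℤ) :
    bccStep d x = ∏ j, (if |x j| = 1 then (1 : ℝ) / 2 else 0) := by
  unfold bccStep
  by_cases h : ∀ j, |x j| = 1
  · rw [if_pos h, Finset.prod_congr rfl (fun j _ => if_pos (h j)), Finset.prod_const]
    simp [div_pow]
  · rw [if_neg h]
    push_neg at h
    obtain ⟨j, hj⟩ := h
    exact (Finset.prod_eq_zero (Finset.mem_univ j)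
      (if_neg hj : (if |x j| = 1 then (1:ℝ)/2 else 0) = 0)).symm

lemma convPow_bcc_eq_prod (d m : ℕ) (x : Fin d → ℤ) :
    convPow d (bccStep d) m x = ∏ j, oneD m (x j) := by
  induction m generalizing x with
  | zero =>
    show (if x = 0 then (1:ℝ) else 0) = _
    by_cases h : x = 0
    · subst h; simp [oneD]
    · rw [if_neg h]
      have : ∃ j, x j ≠ 0 := by
        by_contra hc; push_neg at hc; exact h (funext hc)
      obtain ⟨j, hj⟩ := this
      rw [Finset.prod_eq_zero (Finset.mem_univ j)]
      simp [oneD, hj]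
  | succ m ih =>
    show (∑' y : Fin d → ℤ, convPow d (bccStep d) m y * bccStep d (x - y)) = _
    have key : ∀ y : Fin d → ℤ,
        convPow d (bccStep d) m y * bccStep d (x - y)
          = ∏ j, (oneD m (y j) * if |x j - y j| = 1 then (1:ℝ)/2 else 0) := by
      intro y
      rw [ih, bccStep_eq_prod, ← Finset.prod_mul_distrib]
      simp [Pi.sub_apply]
    -- finite support
    set S : Finset (Fin d → ℤ) :=
      Fintype.piFinset (fun j => ({x j - 1, x j + 1} : Finset ℤ)) with hS
    have hsupp : ∀ y ∉ S, convPow d (bccStep d) m y * bccStep d (x - y) = 0 := by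
      intro y hy
      rw [key]
      rw [hS, Fintype.mem_piFinset] at hy
      push_neg at hy
      obtain ⟨j, hj⟩ := hy
      refine Finset.prod_eq_zero (Finset.mem_univ j) ?_
      have : ¬ |x j - y j| = 1 := by
        simp only [Finset.mem_insert, Finset.mem_singleton] at hj
        push_neg at hj
        rw [abs_eq (by norm_num : (0:ℤ) ≤ 1)]
        omega
      simp [this]
    rw [tsum_eq_sum hsupp]
    have hrec : ∀ j : Fin d, oneD (m+1) (x j)
        = ∑ t ∈ ({x j - 1, x j + 1} : Finset ℤ),
            (oneD m t * if |x j - t| = 1 then (1:ℝ)/2 else 0) := by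
      intro j
      rw [Finset.sum_pair (by omega)]
      have h1 : |x j - (x j - 1)| = 1 := by simp
      have h2 : |x j - (x j + 1)| = 1 := by
        have : x j - (x j + 1) = -1 := by ring
        rw [this]; simp
      rw [if_pos h1, if_pos h2]
      show oneD (m+1) (x j) = _
      simp [oneD]
      ring
    rw [Finset.prod_congr rfl (fun j _ => hrec j), Finset.prod_univ_sum]
    exact Finset.sum_congr rfl (fun y _ => key y)

/-- explicit binomial formula for `oneD`. -/
lemma oneD_eq (m : ℕ) (t : ℤ) :
    oneD m t = if 0 ≤ (m : ℤ) + t ∧ 2 ∣ ((m : ℤ) + t)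
      then (m.choose (((m : ℤ) + t) / 2).toNat : ℝ) / 2 ^ m else 0 := by
  induction m generalizing t with
  | zero =>
    show (if t = 0 then (1:ℝ) else 0) = _
    simp only [Nat.cast_zero, zero_add, pow_zero]
    by_cases h : t = 0
    · subst h; norm_num
    · rw [if_neg h]
      by_cases hc : 0 ≤ t ∧ 2 ∣ t
      · rw [if_pos hc]
        have ht : 1 ≤ (t / 2).toNat := by omega
        rw [Nat.choose_eq_zero_of_lt (by omega)]
        simp
      · rw [if_neg hc]
  | succ m ih =>
    show (oneD m (t - 1) + oneD m (t + 1)) / 2 = _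
    rw [ih, ih]
    simp only [Nat.cast_add, Nat.cast_one]
    by_cases hpar : 2 ∣ ((m : ℤ) + 1 + t)
    · by_cases hpos : 0 ≤ (m : ℤ) + 1 + t
      · rw [if_pos (show 0 ≤ (m:ℤ) + 1 + t ∧ 2 ∣ ((m:ℤ) + 1 + t) from ⟨hpos, hpar⟩)]
        by_cases hzero : (m : ℤ) + 1 + t = 0
        · -- leftmost point
          have h1 : ¬ (0 ≤ (m : ℤ) + (t - 1) ∧ 2 ∣ ((m:ℤ) + (t-1))) := by omega
          have h2 : (0 ≤ (m : ℤ) + (t + 1) ∧ 2 ∣ ((m:ℤ) + (t+1))) := by omega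
          rw [if_neg h1, if_pos h2]
          have e1 : (((m:ℤ) + (t+1)) / 2).toNat = 0 := by omega
          have e2 : (((m:ℤ) + 1 + t) / 2).toNat = 0 := by omega
          rw [e1, e2]
          simp
          ring
        · -- interior: Pascal
          have h1 : (0 ≤ (m : ℤ) + (t - 1) ∧ 2 ∣ ((m:ℤ) + (t-1))) := by omega
          have h2 : (0 ≤ (m : ℤ) + (t + 1) ∧ 2 ∣ ((m:ℤ) + (t+1))) := by omega
          rw [if_pos h1, if_pos h2]
          set k : ℕ := (((m:ℤ) + 1 + t) / 2).toNat with hk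
          have hk1 : 1 ≤ k := by omega
          have e1 : (((m:ℤ) + (t - 1)) / 2).toNat = k - 1 := by omega
          have e2 : (((m:ℤ) + (t + 1)) / 2).toNat = k := by omega
          rw [e1, e2]
          have pascal : (m+1).choose k = m.choose (k-1) + m.choose k := by
            obtain ⟨k', hk'⟩ : ∃ k', k = k' + 1 := ⟨k - 1, by omega⟩
            rw [hk', Nat.choose_succ_succ]
            simp
          rw [pascal]
          push_cast
          ring
      · rw [if_neg (by omega : ¬ (0 ≤ (m : ℤ) + 1 + t ∧ 2 ∣ ((m:ℤ) + 1 + t)))]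
        have h1 : ¬ (0 ≤ (m : ℤ) + (t - 1) ∧ 2 ∣ ((m:ℤ) + (t-1))) := by omega
        have h2 : ¬ (0 ≤ (m : ℤ) + (t + 1) ∧ 2 ∣ ((m:ℤ) + (t+1))) := by omega
        rw [if_neg h1, if_neg h2]
        norm_num
    · rw [if_neg (by omega : ¬ (0 ≤ (m : ℤ) + 1 + t ∧ 2 ∣ ((m:ℤ) + 1 + t)))]
      have h1 : ¬ (0 ≤ (m : ℤ) + (t - 1) ∧ 2 ∣ ((m:ℤ) + (t-1))) := by omega
      have h2 : ¬ (0 ≤ (m : ℤ) + (t + 1) ∧ 2 ∣ ((m:ℤ) + (t+1))) := by omega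
      rw [if_neg h1, if_neg h2]
      norm_num

lemma oneD_two_mul_zero (n : ℕ) :
    oneD (2 * n) 0 = (Nat.centralBinom n : ℝ) / 4 ^ n := by
  rw [oneD_eq]
  have hc : 0 ≤ ((2 * n : ℕ) : ℤ) + 0 ∧ 2 ∣ (((2 * n : ℕ) : ℤ) + 0) := by
    constructor <;> [positivity; exact ⟨n, by push_cast; ring⟩]
  rw [if_pos hc]
  have : ((((2 * n : ℕ) : ℤ) + 0) / 2).toNat = n := by omega
  rw [this, Nat.centralBinom]
  norm_num [pow_mul]


namespace EpsilonAux

open Real Filter Stirling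
open scoped Topology

/-- `centralBinom n / 4^n`. -/
noncomputable def cbr (n : ℕ) : ℝ := (Nat.centralBinom n : ℝ) / 4 ^ n

lemma cbr_nonneg (n : ℕ) : 0 ≤ cbr n := by unfold cbr; positivity

lemma cbr_succ (n : ℕ) :
    cbr (n + 1) = cbr n * ((2 * (n:ℝ) + 1) / (2 * n + 2)) := by
  have hR : ((n:ℝ) + 1) * (Nat.centralBinom (n+1) : ℝ)
      = 2 * (2 * n + 1) * Nat.centralBinom n := by
    exact_mod_cast congrArg (Nat.cast : ℕ → ℝ) (Nat.succ_mul_centralBinom_succ n)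
  have hn1 : ((n:ℝ) + 1) ≠ 0 := by positivity
  have key : (Nat.centralBinom (n+1) : ℝ)
      = 2 * (2 * (n:ℝ) + 1) * Nat.centralBinom n / ((n:ℝ) + 1) := by
    field_simp
    linarith [hR]
  unfold cbr
  rw [key, pow_succ]
  field_simp
  ring

lemma u_mono : Monotone (fun n : ℕ => cbr n ^ 2 * ((n : ℝ) + 1/4)) := by
  apply monotone_nat_of_le_succ
  intro n
  simp only [cbr_succ, mul_pow, Nat.cast_add, Nat.cast_one]
  have hb : (0:ℝ) < (2 * (n:ℝ) + 2) ^ 2 := by positivity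
  have h : ((n:ℝ) + 1/4)
      ≤ ((2 * (n:ℝ) + 1) / (2 * (n:ℝ) + 2)) ^ 2 * ((n:ℝ) + 1 + 1/4) := by
    rw [div_pow, div_mul_eq_mul_div, le_div_iff₀ hb]
    nlinarith [sq_nonneg ((n:ℝ))]
  calc cbr n ^ 2 * ((n:ℝ) + 1/4)
      ≤ cbr n ^ 2 * (((2 * (n:ℝ) + 1) / (2 * (n:ℝ) + 2)) ^ 2 * ((n:ℝ) + 1 + 1/4)) :=
        mul_le_mul_of_nonneg_left h (sq_nonneg _)
    _ = cbr n ^ 2 * ((2 * (n:ℝ) + 1) / (2 * (n:ℝ) + 2)) ^ 2 * ((n:ℝ) + 1 + 1/4) := by ring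

lemma cbr_mul_sqrt (n : ℕ) (hn : 1 ≤ n) :
    cbr n * Real.sqrt n = stirlingSeq (2 * n) / (stirlingSeq n) ^ 2 := by
  have hn0 : (0:ℝ) < n := by exact_mod_cast hn
  have he : (0:ℝ) < Real.exp 1 := Real.exp_pos 1
  have h2n : 2 * n - n = n := by omega
  have hcb : ((2*n).factorial : ℝ)
      = (Nat.centralBinom n : ℝ) * (n.factorial : ℝ) * (n.factorial : ℝ) := by
    have h := Nat.choose_mul_factorial_mul_factorial (show n ≤ 2*n by omega)
    rw [h2n] at h
    rw [Nat.centralBinom]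
    exact_mod_cast h.symm
  unfold stirlingSeq cbr
  have hcast : ((2*n : ℕ) : ℝ) = 2 * (n:ℝ) := by push_cast; ring
  rw [hcast, hcb]
  have hsq : Real.sqrt (2 * (2 * (n:ℝ))) = 2 * Real.sqrt n := by
    rw [show 2 * (2 * (n:ℝ)) = 2^2 * n by ring, Real.sqrt_mul (by positivity),
      Real.sqrt_sq (by norm_num : (0:ℝ) ≤ 2)]
  rw [hsq]
  have hpow : (2 * (n:ℝ) / Real.exp 1) ^ (2*n) = 4^n * (((n:ℝ) / Real.exp 1) ^ n) ^ 2 := by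
    rw [show 2 * (n:ℝ) / Real.exp 1 = 2 * ((n:ℝ) / Real.exp 1) by ring, mul_pow,
      mul_comm 2 n, pow_mul, pow_mul, ← pow_mul 2 n 2, mul_comm n 2, pow_mul]
    norm_num
  rw [hpow]
  have hF : (0:ℝ) < n.factorial := by exact_mod_cast n.factorial_pos
  have h1 : (0:ℝ) < ((n:ℝ) / Real.exp 1) ^ n := by positivity
  have h2 : (0:ℝ) < Real.sqrt n := Real.sqrt_pos.mpr hn0
  have h3 : (0:ℝ) < Real.sqrt (2 * (n:ℝ)) := Real.sqrt_pos.mpr (by positivity)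
  rw [div_pow ((n.factorial : ℝ)) (Real.sqrt (2 * (n:ℝ)) * ((n:ℝ) / Real.exp 1) ^ n) 2,
    mul_pow (Real.sqrt (2 * (n:ℝ))) (((n:ℝ) / Real.exp 1) ^ n) 2,
    Real.sq_sqrt (by positivity : (0:ℝ) ≤ 2 * (n:ℝ))]
  field_simp
  ring_nf
  rw [Real.sq_sqrt hn0.le]

lemma tendsto_u :
    Filter.Tendsto (fun n : ℕ => cbr n ^ 2 * ((n : ℝ) + 1/4)) atTop (𝓝 (1/π)) := by
  have hπ : (0:ℝ) < π := Real.pi_pos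
  have hsπ : Real.sqrt π ≠ 0 := by positivity
  have hs := Stirling.tendsto_stirlingSeq_sqrt_pi
  have h2 : Filter.Tendsto (fun n : ℕ => stirlingSeq (2*n)) atTop (𝓝 (Real.sqrt π)) :=
    hs.comp (tendsto_atTop_mono (fun n => by omega : ∀ n : ℕ, n ≤ 2*n) tendsto_id)
  have hratio : Filter.Tendsto (fun n : ℕ => stirlingSeq (2*n) / stirlingSeq n ^ 2) atTop
      (𝓝 (Real.sqrt π / (Real.sqrt π) ^ 2)) := by
    refine h2.div (hs.pow 2) ?_
    rw [Real.sq_sqrt hπ.le]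
    exact hπ.ne'
  have haux : Filter.Tendsto (fun n : ℕ => (1:ℝ) + 1/4 * ((n:ℝ))⁻¹) atTop
      (𝓝 ((1:ℝ) + 1/4 * 0)) :=
    tendsto_const_nhds.add (tendsto_const_nhds.mul tendsto_inv_atTop_nhds_zero_nat)
  have hmain := (hratio.pow 2).mul haux
  have hval : (Real.sqrt π / (Real.sqrt π) ^ 2) ^ 2 * ((1:ℝ) + 1/4 * 0) = 1/π := by
    rw [Real.sq_sqrt hπ.le, div_pow, Real.sq_sqrt hπ.le]
    field_simp
    ring
  rw [hval] at hmain
  refine hmain.congr' ?_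
  filter_upwards [eventually_ge_atTop 1] with n hn
  have hn0 : (0:ℝ) < n := by exact_mod_cast hn
  rw [← cbr_mul_sqrt n hn, mul_pow, Real.sq_sqrt hn0.le]
  field_simp

lemma cbr_sq_le (n : ℕ) (hn : 1 ≤ n) : cbr n ^ 2 ≤ 1 / (π * n) := by
  have hπ : (0:ℝ) < π := Real.pi_pos
  have hn0 : (0:ℝ) < n := by exact_mod_cast hn
  have hu := u_mono.ge_of_tendsto tendsto_u n
  rw [le_div_iff₀ (by positivity)]
  have h1 : π * (cbr n ^ 2 * ((n:ℝ) + 1/4)) ≤ π * (1/π) :=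
    mul_le_mul_of_nonneg_left hu hπ.le
  rw [mul_one_div, div_self hπ.ne'] at h1
  nlinarith [mul_nonneg hπ.le (sq_nonneg (cbr n))]

lemma cbr_le (n : ℕ) (hn : 1 ≤ n) : cbr n ≤ (π * n) ^ (-(1:ℝ)/2) := by
  have hπ : (0:ℝ) < π := Real.pi_pos
  have hn0 : (0:ℝ) < n := by exact_mod_cast hn
  have h : cbr n ≤ Real.sqrt (1 / (π * n)) := by
    rw [Real.le_sqrt (cbr_nonneg n) (by positivity)]
    exact cbr_sq_le n hn
  refine h.trans_eq ?_
  rw [one_div, Real.sqrt_inv, Real.sqrt_eq_rpow, ← Real.rpow_neg (by positivity)]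
  norm_num

lemma rpow_tel_bounds {q : ℝ} (hq : 0 < q) {a : ℝ} (ha : 1 ≤ a) :
    q * (a + 1) ^ (-q - 1) ≤ a ^ (-q) - (a + 1) ^ (-q) ∧
      a ^ (-q) - (a + 1) ^ (-q) ≤ q * a ^ (-q - 1) := by
  have ha0 : (0:ℝ) < a := lt_of_lt_of_le one_pos ha
  have hab : a < a + 1 := by linarith
  have hcont : ContinuousOn (fun x : ℝ => x ^ (-q)) (Set.Icc a (a + 1)) := by
    intro x hx
    exact (Real.continuousAt_rpow_const x (-q)
      (Or.inl (lt_of_lt_of_le ha0 hx.1).ne')).continuousWithinAt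
  have hderiv : ∀ x ∈ Set.Ioo a (a + 1),
      HasDerivAt (fun x : ℝ => x ^ (-q)) (-q * x ^ (-q - 1)) x := fun x hx =>
    Real.hasDerivAt_rpow_const (Or.inl (lt_trans ha0 hx.1).ne')
  obtain ⟨ξ, hξ, hslope⟩ :=
    exists_hasDerivAt_eq_slope (fun x : ℝ => x ^ (-q)) _ hab hcont hderiv
  have h1 : (a + 1 - a) = (1:ℝ) := by ring
  rw [h1, div_one] at hslope
  have hsimp : a ^ (-q) - (a + 1) ^ (-q) = q * ξ ^ (-q - 1) := by
    linear_combination hslope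
  have hξ0 : (0:ℝ) < ξ := lt_trans ha0 hξ.1
  constructor
  · rw [hsimp]
    exact mul_le_mul_of_nonneg_left
      (Real.rpow_le_rpow_of_nonpos hξ0 hξ.2.le (by linarith)) hq.le
  · rw [hsimp]
    exact mul_le_mul_of_nonneg_left
      (Real.rpow_le_rpow_of_nonpos ha0 hξ.1.le (by linarith)) hq.le

lemma summable_rpow_shift {r : ℝ} (hr : r < -1) {c : ℝ} (hc : 1 ≤ c) :
    Summable (fun k : ℕ => (c + k : ℝ) ^ r) := by
  have h1 : Summable (fun k : ℕ => ((k + 1 : ℕ) : ℝ) ^ r) :=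
    (summable_nat_add_iff 1).mpr (Real.summable_nat_rpow.mpr hr)
  refine Summable.of_nonneg_of_le (fun k => ?_) (fun k => ?_) h1
  · have : (0:ℝ) < c + k := by positivity
    exact Real.rpow_nonneg this.le r
  · refine Real.rpow_le_rpow_of_nonpos (by positivity) ?_ (by linarith)
    push_cast
    linarith

lemma tel_hasSum {q : ℝ} (hq : 0 < q) {c : ℝ} (hc : 1 ≤ c) :
    HasSum (fun k : ℕ => (c + k) ^ (-q) - (c + k + 1) ^ (-q)) (c ^ (-q)) := by
  set g : ℕ → ℝ := fun k => (c + k) ^ (-q) with hg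
  have hgs : ∀ k : ℕ, (c + (k:ℝ) + 1) ^ (-q) = g (k + 1) := by
    intro k
    rw [hg]
    congr 1
    push_cast
    ring
  have hpos : ∀ k : ℕ, (0:ℝ) < c + k := fun k => by positivity
  have hmono : ∀ k : ℕ, g (k + 1) ≤ g k := by
    intro k
    refine Real.rpow_le_rpow_of_nonpos (hpos k) ?_ (by linarith)
    push_cast
    linarith
  have hnonneg : ∀ k : ℕ, 0 ≤ g k - g (k + 1) := fun k => sub_nonneg.mpr (hmono k)
  have hgnn : ∀ k : ℕ, 0 ≤ g k := fun k => Real.rpow_nonneg (hpos k).le _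
  have hsummable : Summable (fun k : ℕ => g k - g (k + 1)) := by
    refine summable_of_sum_range_le (c := g 0) hnonneg (fun K => ?_)
    rw [Finset.sum_range_sub' g K]
    have := hgnn K
    linarith
  have hlim : Filter.Tendsto g atTop (𝓝 0) := by
    have h1 : Filter.Tendsto (fun k : ℕ => c + (k:ℝ)) atTop atTop :=
      tendsto_atTop_add_const_left atTop c tendsto_natCast_atTop_atTop
    have h2 : Filter.Tendsto (fun k : ℕ => (c + (k:ℝ)) ^ q) atTop atTop :=
      (tendsto_rpow_atTop hq).comp h1
    refine h2.inv_tendsto_atTop.congr fun k => ?_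
    simp only [Pi.inv_apply]
    exact (Real.rpow_neg (hpos k).le q).symm
  have hpartial : Filter.Tendsto (fun K => ∑ i ∈ Finset.range K, (g i - g (i + 1)))
      atTop (𝓝 (g 0)) := by
    have h0 : Filter.Tendsto (fun K : ℕ => g 0 - g K) atTop (𝓝 (g 0 - 0)) :=
      tendsto_const_nhds.sub hlim
    rw [sub_zero] at h0
    refine h0.congr fun K => ?_
    rw [Finset.sum_range_sub' g K]
  have htsum : ∑' k, (g k - g (k + 1)) = g 0 :=
    tendsto_nhds_unique hsummable.hasSum.tendsto_sum_nat hpartial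
  have hg0 : g 0 = c ^ (-q) := by
    rw [hg]
    norm_num
  have hfin : HasSum (fun k : ℕ => g k - g (k + 1)) (c ^ (-q)) := by
    rw [← hg0, ← htsum]
    exact hsummable.hasSum
  refine hfin.congr_fun fun k => ?_
  rw [hgs k]

lemma tsum_rpow_le {q : ℝ} (hq : 0 < q) {c : ℝ} (hc : 1 ≤ c) :
    ∑' k : ℕ, (c + k : ℝ) ^ (-q - 1) ≤ c ^ (-q - 1) + c ^ (-q) / q := by
  have hsum : Summable (fun k : ℕ => (c + k : ℝ) ^ (-q - 1)) :=
    summable_rpow_shift (by linarith) hc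
  rw [Summable.tsum_eq_zero_add hsum]
  have h0 : (c + ((0:ℕ):ℝ)) ^ (-q - 1) = c ^ (-q - 1) := by norm_num
  rw [h0]
  refine add_le_add (le_refl _) ?_
  have htel := tel_hasSum hq hc
  calc ∑' k : ℕ, (c + ((k + 1 : ℕ):ℝ)) ^ (-q - 1)
      ≤ ∑' k : ℕ, (1/q) * ((c + k) ^ (-q) - (c + k + 1) ^ (-q)) := by
        refine Summable.tsum_le_tsum (fun k => ?_) ((summable_nat_add_iff 1).mpr hsum)
          (htel.summable.mul_left _)
        have hck : (1:ℝ) ≤ c + k := le_add_of_le_of_nonneg hc (Nat.cast_nonneg k)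
        have hkey := (rpow_tel_bounds hq hck).1
        have hc1 : (c + (k:ℝ) + 1) = (c + ((k + 1 : ℕ):ℝ)) := by push_cast; ring
        rw [← hc1]
        calc (c + (k:ℝ) + 1) ^ (-q - 1)
            = (1/q) * (q * (c + (k:ℝ) + 1) ^ (-q - 1)) := by field_simp
          _ ≤ (1/q) * ((c + (k:ℝ)) ^ (-q) - (c + (k:ℝ) + 1) ^ (-q)) :=
              mul_le_mul_of_nonneg_left hkey (by positivity)
    _ = (1/q) * c ^ (-q) := by rw [tsum_mul_left, htel.tsum_eq]
    _ = c ^ (-q) / q := by ring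

lemma tsum_rpow_ge {q : ℝ} (hq : 0 < q) {c : ℝ} (hc : 1 ≤ c) :
    c ^ (-q) / q ≤ ∑' k : ℕ, (c + k : ℝ) ^ (-q - 1) := by
  have hsum : Summable (fun k : ℕ => (c + k : ℝ) ^ (-q - 1)) :=
    summable_rpow_shift (by linarith) hc
  have htel := tel_hasSum hq hc
  calc c ^ (-q) / q = (1/q) * c ^ (-q) := by ring
    _ = ∑' k : ℕ, (1/q) * ((c + k) ^ (-q) - (c + k + 1) ^ (-q)) := by
        rw [tsum_mul_left, htel.tsum_eq]
    _ ≤ ∑' k : ℕ, (c + k : ℝ) ^ (-q - 1) := by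
        refine Summable.tsum_le_tsum (fun k => ?_) (htel.summable.mul_left _) hsum
        have hck : (1:ℝ) ≤ c + k := le_add_of_le_of_nonneg hc (Nat.cast_nonneg k)
        have hkey := (rpow_tel_bounds hq hck).2
        rw [div_mul_eq_mul_div, one_mul, div_le_iff₀ hq]
        linarith [hkey]

end EpsilonAux

theorem epsilon_two_bound
    (d : ℕ) (hd : 5 ≤ d) (ν N : ℕ) (hν : 1 ≤ ν) (hN : 1 ≤ N) :
    ∑' n : ℕ, ((n : ℝ) + 1) * convPow d (bccStep d) (2 * (n + ν)) 0 ≤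
      (∑ n ∈ Finset.range N, ((n : ℝ) + 1) * convPow d (bccStep d) (2 * (n + ν)) 0)
        + Real.pi ^ (-(d : ℝ) / 2) * ((ν : ℝ) + N) ^ ((2 - (d : ℝ)) / 2)
        + 2 / (Real.pi ^ ((d : ℝ) / 2) * ((d : ℝ) - 4)) * ((ν : ℝ) + N) ^ ((4 - (d : ℝ)) / 2)
        - 2 * ((ν : ℝ) - 1) / (Real.pi ^ ((d : ℝ) / 2) * ((d : ℝ) - 2))
            * ((ν : ℝ) + N) ^ ((2 - (d : ℝ)) / 2) := by
  have hπ : (0:ℝ) < Real.pi := Real.pi_pos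
  have hd5 : (5:ℝ) ≤ (d:ℝ) := by exact_mod_cast hd
  have hν1 : (1:ℝ) ≤ (ν:ℝ) := by exact_mod_cast hν
  have hN1 : (1:ℝ) ≤ (N:ℝ) := by exact_mod_cast hN
  set e : ℝ := -(d:ℝ)/2 with hE
  have he1 : e + 1 < -1 := by rw [hE]; linarith
  have he2 : e < -1 := by rw [hE]; linarith
  set f : ℕ → ℝ := fun n => ((n:ℝ)+1) * convPow d (bccStep d) (2*(n+ν)) 0 with hf
  -- pointwise formula and bound
  have hDn : ∀ m : ℕ, convPow d (bccStep d) (2*m) 0 = EpsilonAux.cbr m ^ d := by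
    intro m
    rw [convPow_bcc_eq_prod]
    simp only [Pi.zero_apply, Finset.prod_const, Finset.card_univ, Fintype.card_fin,
      oneD_two_mul_zero]
    rfl
  have hmain : ∀ m : ℕ, 1 ≤ m →
      convPow d (bccStep d) (2*m) 0 ≤ Real.pi ^ e * (m:ℝ) ^ e := by
    intro m hm
    have hm0 : (0:ℝ) < m := by exact_mod_cast hm
    rw [hDn m]
    have h1 : EpsilonAux.cbr m ≤ (Real.pi * m) ^ (-(1:ℝ)/2) := EpsilonAux.cbr_le m hm
    have h2 : EpsilonAux.cbr m ^ d ≤ ((Real.pi * m) ^ (-(1:ℝ)/2)) ^ d :=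
      pow_le_pow_left₀ (EpsilonAux.cbr_nonneg m) h1 d
    refine h2.trans_eq ?_
    rw [← Real.rpow_natCast ((Real.pi * (m:ℝ)) ^ (-(1:ℝ)/2)) d,
      ← Real.rpow_mul (by positivity : (0:ℝ) ≤ Real.pi * m),
      show -(1:ℝ)/2 * (d:ℝ) = e by rw [hE]; ring,
      Real.mul_rpow hπ.le hm0.le]
  have hterm_nonneg : ∀ n : ℕ, 0 ≤ f n := by
    intro n
    simp only [hf]
    refine mul_nonneg (by positivity) ?_
    rw [hDn]
    exact pow_nonneg (EpsilonAux.cbr_nonneg _) d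
  have hbound : ∀ n : ℕ, f n ≤ Real.pi ^ e * ((ν:ℝ) + n) ^ (e+1) := by
    intro n
    simp only [hf]
    have h2 := hmain (n+ν) (by omega)
    have hcast : ((n+ν:ℕ):ℝ) = (ν:ℝ) + n := by push_cast; ring
    rw [hcast] at h2
    calc ((n:ℝ)+1) * convPow d (bccStep d) (2*(n+ν)) 0
        ≤ ((n:ℝ)+1) * (Real.pi ^ e * ((ν:ℝ)+n) ^ e) :=
          mul_le_mul_of_nonneg_left h2 (by positivity)
      _ ≤ ((ν:ℝ)+n) * (Real.pi ^ e * ((ν:ℝ)+n) ^ e) := by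
          refine mul_le_mul_of_nonneg_right ?_ ?_
          · have hn0 : (0:ℝ) ≤ n := Nat.cast_nonneg n
            linarith
          · have : (0:ℝ) < (ν:ℝ)+n := by positivity
            positivity
      _ = Real.pi ^ e * ((ν:ℝ)+n) ^ (e+1) := by
          rw [Real.rpow_add_one (by positivity : ((ν:ℝ)+(n:ℝ)) ≠ 0) e]
          ring
  have hsumm : Summable f := by
    refine Summable.of_nonneg_of_le hterm_nonneg hbound ?_
    exact (EpsilonAux.summable_rpow_shift he1 hν1).mul_left _
  rw [← Summable.sum_add_tsum_nat_add N hsumm]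
  set c : ℝ := (ν:ℝ) + (N:ℝ) with hc
  have hc1 : (1:ℝ) ≤ c := by rw [hc]; linarith
  rw [show (2-(d:ℝ))/2 = e + 1 by rw [hE]; ring,
    show (4-(d:ℝ))/2 = e + 2 by rw [hE]; ring]
  have hq1 : (0:ℝ) < (d:ℝ)/2 - 2 := by linarith
  have hq2 : (0:ℝ) < (d:ℝ)/2 - 1 := by linarith
  have hs1 : Summable (fun k : ℕ => Real.pi ^ e * (c+k) ^ (e+1)) :=
    (EpsilonAux.summable_rpow_shift he1 hc1).mul_left _
  have hs2 : Summable (fun k : ℕ => ((ν:ℝ)-1) * Real.pi ^ e * (c+k) ^ e) :=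
    (EpsilonAux.summable_rpow_shift he2 hc1).mul_left _
  have hA := EpsilonAux.tsum_rpow_le (q := (d:ℝ)/2 - 2) hq1 hc1
  rw [show -((d:ℝ)/2-2)-1 = e + 1 by rw [hE]; ring,
    show -((d:ℝ)/2-2) = e + 2 by rw [hE]; ring] at hA
  have hB := EpsilonAux.tsum_rpow_ge (q := (d:ℝ)/2 - 1) hq2 hc1
  rw [show -((d:ℝ)/2-1)-1 = e by rw [hE]; ring,
    show -((d:ℝ)/2-1) = e + 1 by rw [hE]; ring] at hB
  have hπe : (0:ℝ) ≤ Real.pi ^ e := Real.rpow_nonneg hπ.le e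
  have hν0 : (0:ℝ) ≤ (ν:ℝ) - 1 := by linarith
  have htail : (∑' k : ℕ, f (k+N))
      ≤ Real.pi ^ e * c ^ (e+1)
        + 2 / (Real.pi ^ ((d:ℝ)/2) * ((d:ℝ)-4)) * c ^ (e+2)
        - 2 * ((ν:ℝ)-1) / (Real.pi ^ ((d:ℝ)/2) * ((d:ℝ)-2)) * c ^ (e+1) := by
    have hk : ∀ k : ℕ, f (k+N)
        ≤ Real.pi ^ e * (c+k) ^ (e+1) - ((ν:ℝ)-1) * Real.pi ^ e * (c+k) ^ e := by
      intro k
      simp only [hf]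
      have h1 := hmain ((k+N)+ν) (by omega)
      have hcast : (((k+N)+ν:ℕ):ℝ) = c + k := by rw [hc]; push_cast; ring
      rw [hcast] at h1
      calc ((((k+N):ℕ):ℝ)+1) * convPow d (bccStep d) (2*((k+N)+ν)) 0
          ≤ ((((k+N):ℕ):ℝ)+1) * (Real.pi ^ e * (c+k) ^ e) :=
            mul_le_mul_of_nonneg_left h1 (by positivity)
        _ = Real.pi ^ e * (c+k) ^ (e+1) - ((ν:ℝ)-1) * Real.pi ^ e * (c+k) ^ e := by
            have hne : (c+(k:ℝ)) ≠ 0 := by positivity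
            rw [Real.rpow_add_one hne e,
              show (((k+N:ℕ):ℝ)+1) = (c + (k:ℝ)) - ((ν:ℝ)-1) by rw [hc]; push_cast; ring]
            ring
    calc (∑' k : ℕ, f (k+N))
        ≤ ∑' k : ℕ, (Real.pi ^ e * (c+k) ^ (e+1) - ((ν:ℝ)-1) * Real.pi ^ e * (c+k) ^ e) :=
          Summable.tsum_le_tsum hk ((summable_nat_add_iff N).mpr hsumm) (hs1.sub hs2)
      _ = Real.pi ^ e * (∑' k : ℕ, (c+k) ^ (e+1))
          - ((ν:ℝ)-1) * Real.pi ^ e * (∑' k : ℕ, (c+k) ^ e) := by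
          rw [Summable.tsum_sub hs1 hs2, tsum_mul_left, tsum_mul_left]
      _ ≤ Real.pi ^ e * (c ^ (e+1) + c ^ (e+2) / ((d:ℝ)/2-2))
          - ((ν:ℝ)-1) * Real.pi ^ e * (c ^ (e+1) / ((d:ℝ)/2-1)) := by
          have t1 := mul_le_mul_of_nonneg_left hA hπe
          have t2 := mul_le_mul_of_nonneg_left hB (mul_nonneg hν0 hπe)
          linarith
      _ = Real.pi ^ e * c ^ (e+1)
          + 2 / (Real.pi ^ ((d:ℝ)/2) * ((d:ℝ)-4)) * c ^ (e+2)
          - 2 * ((ν:ℝ)-1) / (Real.pi ^ ((d:ℝ)/2) * ((d:ℝ)-2)) * c ^ (e+1) := by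
          have hP : (0:ℝ) < Real.pi ^ ((d:ℝ)/2) := Real.rpow_pos_of_pos hπ _
          have hPe : Real.pi ^ e = (Real.pi ^ ((d:ℝ)/2))⁻¹ := by
            rw [hE, ← Real.rpow_neg hπ.le]
            congr 1
            ring
          have h4 : (d:ℝ) - 4 ≠ 0 := by linarith
          have h2 : (d:ℝ) - 2 ≠ 0 := by linarith
          have h42 : (d:ℝ)/2 - 2 ≠ 0 := by linarith
          have h21 : (d:ℝ)/2 - 1 ≠ 0 := by linarith
          set Q : ℝ := (d:ℝ)/2 - 2 with hQ
          set R : ℝ := (d:ℝ)/2 - 1 with hR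
          have hdq : (d:ℝ) - 4 = 2*Q := by rw [hQ]; ring
          have hdr : (d:ℝ) - 2 = 2*R := by rw [hR]; ring
          have hA2 : Real.pi ^ e * (1/Q) = 2 / (Real.pi ^ ((d:ℝ)/2) * ((d:ℝ)-4)) := by
            rw [hPe, hdq, eq_div_iff (mul_ne_zero hP.ne' (mul_ne_zero two_ne_zero hq1.ne'))]
            field_simp [hP.ne', hq1.ne']
          have hB2 : Real.pi ^ e * (1/R) = 2 / (Real.pi ^ ((d:ℝ)/2) * ((d:ℝ)-2)) := by
            rw [hPe, hdr, eq_div_iff (mul_ne_zero hP.ne' (mul_ne_zero two_ne_zero hq2.ne'))]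
            field_simp [hP.ne', hq2.ne']
          calc Real.pi ^ e * (c ^ (e+1) + c ^ (e+2) / Q)
              - ((ν:ℝ)-1) * Real.pi ^ e * (c ^ (e+1) / R)
              = Real.pi ^ e * c ^ (e+1)
                + (Real.pi ^ e * (1/Q)) * c ^ (e+2)
                - ((ν:ℝ)-1) * (Real.pi ^ e * (1/R)) * c ^ (e+1) := by ring
            _ = Real.pi ^ e * c ^ (e+1)
                + 2 / (Real.pi ^ ((d:ℝ)/2) * ((d:ℝ)-4)) * c ^ (e+2)
                - 2 * ((ν:ℝ)-1) / (Real.pi ^ ((d:ℝ)/2) * ((d:ℝ)-2)) * c ^ (e+1) := by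
                rw [hA2, hB2]
                ring
  linarith [htail]
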